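/- arXiv:1704.05673 — 8 statements merged into one kernel-verified Lean document; each statement's English description precedes it below -/
import Mathlib

section
/- Let V be a finite-dimensional vector space over a field F with dim V ≥ 2. Then the girth of the subspace inclusion graph In(V) is either 3, 6, or ∞ (the latter meaning In(V) is acyclic). -/
/-! In dimension `≤ 2` the graph has no edges. A chain `0 < U₁ < U₂ < U₃ < V` is a triangle,
so the girth is `3` as soon as `V` contains four independent vectors, in particular in infinite
dimension. In dimension `3` the vertices are lines and planes and adjacency is incidence: the
graph is bipartite, and it has no `4`-cycle because two distinct lines lie in only one common
plane, their span. The cycles themselves come from the subsets of an independent family `v`,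
since `s ↦ span (v '' s)` embeds the Boolean lattice into the lattice of subspaces. -/

/-- The vertex type of the subspace inclusion graph: nontrivial proper subspaces. -/
abbrev InVert (F V : Type*) [Field F] [AddCommGroup V] [Module F V] :=
  {W : Submodule F V // W ≠ ⊥ ∧ W ≠ ⊤}

/-- The subspace inclusion graph `In(V)`: vertices are the nontrivial proper subspaces
of `V`, two of them being adjacent iff one is properly contained in the other. -/
def inclGraph (F V : Type*) [Field F] [AddCommGroup V] [Module F V] :
    SimpleGraph (InVert F V) where
  Adj W₁ W₂ := W₁.1 < W₂.1 ∨ W₂.1 < W₁.1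
  symm := ⟨fun _ _ h => h.symm⟩
  loopless := ⟨fun _ h => h.elim (lt_irrefl _) (lt_irrefl _)⟩

open Module Submodule SimpleGraph Function

namespace SimpleGraph

variable {α : Type*} {G : SimpleGraph α}

theorem egirth_le_of_cycleGraph_isContained {n : ℕ} (hn : 3 ≤ n) (h : cycleGraph n ⊑ G) :
    G.egirth ≤ n := by
  obtain ⟨a, w, hw, hlen⟩ := (cycleGraph_isContained_iff hn).1 h
  exact hlen ▸ egirth_le_length hw

theorem six_le_egirth_of_cycleGraph_four_free (c : G.Coloring Bool) (h4 : (cycleGraph 4).Free G) :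
    6 ≤ G.egirth := by
  refine le_egirth.2 fun a w hw => ?_
  have h3 := hw.three_le_length
  obtain ⟨k, hk⟩ : Even w.length := (c.even_length_iff_congr w).2 Iff.rfl
  have hne4 : w.length ≠ 4 := fun h =>
    h4 ((cycleGraph_isContained_iff (by norm_num)).2 ⟨a, w, hw, h⟩)
  exact_mod_cast (by omega : 6 ≤ w.length)

end SimpleGraph

namespace LinearIndependent

section Semiring

variable {R M ι : Type*} [Semiring R] [Nontrivial R] [AddCommMonoid M] [Module R M] {v : ι → M}
  (hv : LinearIndependent R v)
include hv

theorem span_image_le_span_image_iff {s t : Set ι} :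
    span R (v '' s) ≤ span R (v '' t) ↔ s ⊆ t := by
  refine ⟨fun h i hi => ?_, fun h => span_mono (Set.image_mono h)⟩
  by_contra hit
  exact hv.notMem_span_image hit (h (subset_span (Set.mem_image_of_mem v hi)))

theorem span_image_ne_bot {s : Set ι} (hs : s.Nonempty) : span R (v '' s) ≠ ⊥ := by
  obtain ⟨i, hi⟩ := hs
  exact (Submodule.ne_bot_iff _).2 ⟨v i, subset_span (Set.mem_image_of_mem v hi), hv.ne_zero i⟩

theorem span_image_ne_top {s : Set ι} {i : ι} (hi : i ∉ s) : span R (v '' s) ≠ ⊤ :=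
  fun h => hv.notMem_span_image hi (h ▸ mem_top)

end Semiring

theorem isContained_inclGraph {F V ι β : Type*} [Field F] [AddCommGroup V] [Module F V]
    {v : ι → V} (hv : LinearIndependent F v) {G : SimpleGraph β} (φ : β → Finset ι)
    (hφ : Injective φ) (hne : ∀ b, (φ b).Nonempty) (hnu : ∀ b, ∃ i, i ∉ φ b)
    (hadj : ∀ a b, G.Adj a b → φ a < φ b ∨ φ b < φ a) : G ⊑ inclGraph F V := by
  have hlt {s t : Finset ι} (h : s < t) : span F (v '' s) < span F (v '' t) := by
    simp only [lt_iff_le_not_ge, hv.span_image_le_span_image_iff, Finset.coe_subset] at h ⊢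
    exact h
  let f : β → InVert F V := fun b =>
    ⟨span F (v '' φ b), hv.span_image_ne_bot (hne b), hv.span_image_ne_top (hnu b).choose_spec⟩
  refine ⟨⟨⟨f, fun {a b} h => (hadj a b h).imp hlt hlt⟩, fun a b h => hφ ?_⟩⟩
  have h := congrArg Subtype.val h
  exact Finset.coe_injective <| Set.Subset.antisymm
    (hv.span_image_le_span_image_iff.1 h.le) (hv.span_image_le_span_image_iff.1 h.ge)

end LinearIndependent

namespace InVert

variable {F V : Type*} [Field F] [AddCommGroup V] [Module F V] [FiniteDimensional F V]

theorem finrank_pos (u : InVert F V) : 0 < finrank F u.1 :=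
  Nat.pos_of_ne_zero (mt Submodule.finrank_eq_zero.1 u.2.1)

theorem finrank_lt (u : InVert F V) : finrank F u.1 < finrank F V :=
  Submodule.finrank_lt u.2.2

theorem lt_of_adj_of_finrank_eq_one {u w : InVert F V} (h : (inclGraph F V).Adj u w)
    (hu : finrank F u.1 = 1) : u.1 < w.1 :=
  h.resolve_right fun hwu => by
    have := finrank_lt_finrank_of_lt hwu
    have := w.finrank_pos
    omega

theorem finrank_add_finrank_of_adj (h3 : finrank F V = 3) {u w : InVert F V}
    (h : (inclGraph F V).Adj u w) : finrank F u.1 + finrank F w.1 = 3 := by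
  have := u.finrank_pos; have := u.finrank_lt; have := w.finrank_pos; have := w.finrank_lt
  rcases h with h | h <;> have := finrank_lt_finrank_of_lt h <;> omega

theorem eq_or_eq_of_lt_of_lt_of_lt_of_lt (h3 : finrank F V = 3) {x z y w : InVert F V}
    (hxy : x.1 < y.1) (hxw : x.1 < w.1) (hzy : z.1 < y.1) (hzw : z.1 < w.1) : x = z ∨ y = w := by
  refine or_iff_not_imp_right.2 fun hyw => ?_
  have hry := finrank_lt_finrank_of_lt hxy
  have hinf : finrank F ↥(y.1 ⊓ w.1) < finrank F y.1 := by
    refine finrank_lt_finrank_of_lt (inf_lt_left.2 fun hle => ?_)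
    have := finrank_lt_finrank_of_lt (hle.lt_of_ne (hyw ∘ Subtype.ext))
    have := w.finrank_lt
    have := x.finrank_pos
    omega
  have eq_inf {t : InVert F V} (hty : t.1 < y.1) (htw : t.1 < w.1) : t.1 = y.1 ⊓ w.1 := by
    have := t.finrank_pos
    have := y.finrank_lt
    exact eq_of_le_of_finrank_le (le_inf hty.le htw.le) (by omega)
  exact Subtype.ext ((eq_inf hxy hxw).trans (eq_inf hzy hzw).symm)

end InVert

section Girth

variable {F V : Type*} [Field F] [AddCommGroup V] [Module F V]

theorem inclGraph_eq_bot [FiniteDimensional F V] (h : finrank F V ≤ 2) : inclGraph F V = ⊥ := by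
  ext u w
  refine iff_of_false (fun huw => ?_) id
  have := u.finrank_pos; have := u.finrank_lt; have := w.finrank_pos; have := w.finrank_lt
  rcases huw with h | h <;> have := finrank_lt_finrank_of_lt h <;> omega

theorem egirth_inclGraph_eq_three {v : Fin 4 → V} (hv : LinearIndependent F v) :
    (inclGraph F V).egirth = 3 := by
  refine le_antisymm (egirth_le_of_cycleGraph_isContained le_rfl ?_) three_le_egirth
  exact hv.isContained_inclGraph ![{0}, {0, 1}, {0, 1, 2}] (by decide) (by decide) (by decide)
    (by decide)

theorem cycleGraph_six_isContained_inclGraph {v : Fin 3 → V} (hv : LinearIndependent F v) :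
    cycleGraph 6 ⊑ inclGraph F V :=
  hv.isContained_inclGraph ![{0}, {0, 1}, {1}, {1, 2}, {2}, {0, 2}] (by decide) (by decide)
    (by decide) (by decide)

variable [FiniteDimensional F V]

noncomputable def inclGraphLineColoring (h3 : finrank F V = 3) : (inclGraph F V).Coloring Bool :=
  Coloring.mk (fun u => decide (finrank F u.1 = 1)) fun {u w} h => by
    have := InVert.finrank_add_finrank_of_adj h3 h
    have := u.finrank_pos
    have := w.finrank_pos
    rw [ne_eq, decide_eq_decide, not_iff]
    constructor <;> intro <;> omega

theorem cycleGraph_four_free_inclGraph (h3 : finrank F V = 3) :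
    (cycleGraph 4).Free (inclGraph F V) := by
  have square {a b c d : InVert F V} (hab : (inclGraph F V).Adj a b) (hbc : (inclGraph F V).Adj b c)
      (hcd : (inclGraph F V).Adj c d) (hda : (inclGraph F V).Adj d a) (ha : finrank F a.1 = 1) :
      a = c ∨ b = d := by
    have := InVert.finrank_add_finrank_of_adj h3 hab
    have := InVert.finrank_add_finrank_of_adj h3 hbc
    have := InVert.finrank_add_finrank_of_adj h3 hcd
    exact InVert.eq_or_eq_of_lt_of_lt_of_lt_of_lt h3 (InVert.lt_of_adj_of_finrank_eq_one hab ha)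
      (InVert.lt_of_adj_of_finrank_eq_one hda.symm ha)
      (InVert.lt_of_adj_of_finrank_eq_one hbc.symm (by omega))
      (InVert.lt_of_adj_of_finrank_eq_one hcd (by omega))
  rintro ⟨f⟩
  have hadj (i : Fin 4) : (inclGraph F V).Adj (f i) (f (i + 1)) :=
    f.toHom.map_adj (by revert i; decide)
  have h01 : (inclGraph F V).Adj (f 0) (f 1) := hadj 0
  have := InVert.finrank_add_finrank_of_adj h3 h01
  have := (f 0).finrank_pos
  have := (f 1).finrank_pos
  have hline : finrank F (f 0).1 = 1 ∨ finrank F (f 1).1 = 1 := by omega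
  rcases hline with h | h
  · rcases square (hadj 0) (hadj 1) (hadj 2) (hadj 3) h with e | e <;>
      exact absurd (f.injective' e) (by decide)
  · rcases square (hadj 1) (hadj 2) (hadj 3) (hadj 0) h with e | e <;>
      exact absurd (f.injective' e) (by decide)

theorem egirth_inclGraph_eq_six (h3 : finrank F V = 3) : (inclGraph F V).egirth = 6 :=
  le_antisymm
    (egirth_le_of_cycleGraph_isContained (by norm_num)
      (cycleGraph_six_isContained_inclGraph (finBasisOfFinrankEq F V h3).linearIndependent))
    (six_le_egirth_of_cycleGraph_four_free (inclGraphLineColoring h3)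
      (cycleGraph_four_free_inclGraph h3))

end Girth

theorem inclGraph_egirth_eq_three_or_six_or_top_general
    (F V : Type*) [Field F] [AddCommGroup V] [Module F V] :
    (inclGraph F V).egirth = 3 ∨ (inclGraph F V).egirth = 6 ∨ (inclGraph F V).egirth = ⊤ := by
  rcases le_or_gt ((4 : ℕ) : Cardinal) (Module.rank F V) with h4 | h4
  · obtain ⟨v, hv⟩ := le_rank_iff.1 h4
    exact Or.inl (egirth_inclGraph_eq_three hv)
  have : FiniteDimensional F V :=
    Module.rank_lt_aleph0_iff.1 (h4.trans Cardinal.natCast_lt_aleph0)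
  rw [← finrank_eq_rank, Nat.cast_lt] at h4
  rcases (by omega : finrank F V ≤ 2 ∨ finrank F V = 3) with h | h
  · exact Or.inr (Or.inr (by rw [inclGraph_eq_bot h, egirth_bot]))
  · exact Or.inr (Or.inl (egirth_inclGraph_eq_six h))

/-- If `dim V ≥ 2`, the girth of the subspace inclusion graph `In(V)` is `3`, `6`,
or `∞` (the latter meaning that `In(V)` is acyclic). -/
theorem inclGraph_egirth_eq_three_or_six_or_top
    (F V : Type*) [Field F] [AddCommGroup V] [Module F V] [FiniteDimensional F V]
    (h2 : 2 ≤ Module.finrank F V) :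
    (inclGraph F V).egirth = 3 ∨ (inclGraph F V).egirth = 6 ∨ (inclGraph F V).egirth = ⊤ :=
  inclGraph_egirth_eq_three_or_six_or_top_general F V
end

section
/- Let V be a vector space over a field F with dim V = n, 2 ≤ n < ∞. Then the clique number of the subspace inclusion graph In(V) equals n − 1. -/
open Module Finset

lemma SimpleGraph.cliqueNum_eq_of_isNClique {α : Type*} {G : SimpleGraph α} {m : ℕ}
    {s : Finset α} (hs : G.IsNClique m s) (hle : ∀ t : Finset α, G.IsClique (t : Set α) → #t ≤ m) :
    G.cliqueNum = m := by
  have hub : m ∈ upperBounds {k | ∃ t, G.IsNClique k t} := by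
    rintro _ ⟨t, ht⟩
    exact ht.card_eq ▸ hle t ht.isClique
  exact le_antisymm (csSup_le ⟨m, s, hs⟩ hub) (le_csSup ⟨m, hub⟩ ⟨s, hs⟩)

namespace Module.Basis

variable {R M : Type*} [Ring R] [Nontrivial R] [AddCommGroup M] [Module R M] {n : ℕ}

lemma flag_ne_bot (b : Basis (Fin n) R M) {k : Fin (n + 1)} (hk : k ≠ 0) : b.flag k ≠ ⊥ :=
  b.flag_zero ▸ (b.flag_strictMono (Fin.pos_iff_ne_zero.2 hk)).ne'

lemma flag_ne_top (b : Basis (Fin n) R M) {k : Fin (n + 1)} (hk : k ≠ Fin.last n) :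
    b.flag k ≠ ⊤ :=
  b.flag_last ▸ (b.flag_strictMono (Fin.lt_last_iff_ne_last.2 hk)).ne

end Module.Basis

section

variable {F V : Type*} [Field F] [AddCommGroup V] [Module F V]

lemma inclGraph_isClique_range {ι : Type*} [LinearOrder ι] {f : ι → InVert F V}
    (hf : StrictMono f) : (inclGraph F V).IsClique (Set.range f) := by
  rintro _ ⟨i, rfl⟩ _ ⟨j, rfl⟩ hne
  rcases lt_or_gt_of_ne (ne_of_apply_ne f hne) with h | h
  exacts [Or.inl (hf h), Or.inr (hf h)]

def Module.Basis.innerFlag {m : ℕ} (b : Basis (Fin (m + 1)) F V) (i : Fin m) : InVert F V :=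
  ⟨b.flag i.succ.castSucc, b.flag_ne_bot (Fin.castSucc_ne_zero_iff.2 i.succ_ne_zero),
    b.flag_ne_top (Fin.castSucc_ne_last _)⟩

lemma Module.Basis.innerFlag_strictMono {m : ℕ} (b : Basis (Fin (m + 1)) F V) :
    StrictMono b.innerFlag :=
  fun _ _ hij => b.flag_strictMono (Fin.castSucc_lt_castSucc_iff.2 (Fin.succ_lt_succ_iff.2 hij))

variable [FiniteDimensional F V]

lemma InVert.finrank_mem_Ioo (W : InVert F V) : finrank F W.1 ∈ Ioo 0 (finrank F V) :=
  mem_Ioo.2 ⟨Nat.pos_of_ne_zero (mt Submodule.finrank_eq_zero.1 W.2.1), Submodule.finrank_lt W.2.2⟩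

lemma inclGraph_injOn_finrank_of_isClique {s : Set (InVert F V)}
    (hs : (inclGraph F V).IsClique s) : s.InjOn fun W => finrank F W.1 := by
  intro W₁ h₁ W₂ h₂ hW
  by_contra hne
  rcases hs h₁ h₂ hne with h | h
  · exact (Submodule.finrank_lt_finrank_of_lt h).ne hW
  · exact (Submodule.finrank_lt_finrank_of_lt h).ne' hW

lemma card_le_finrank_sub_one_of_isClique {s : Finset (InVert F V)}
    (hs : (inclGraph F V).IsClique (s : Set (InVert F V))) : #s ≤ finrank F V - 1 :=
  calc #s = #(s.image fun W => finrank F W.1) :=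
        (card_image_of_injOn (inclGraph_injOn_finrank_of_isClique hs)).symm
    _ ≤ #(Ioo 0 (finrank F V)) :=
        card_le_card (image_subset_iff.2 fun W _ => W.finrank_mem_Ioo)
    _ = finrank F V - 1 := by simp

lemma exists_isNClique_inclGraph_finrank_sub_one :
    ∃ s, (inclGraph F V).IsNClique (finrank F V - 1) s := by
  rcases h : finrank F V with _ | m
  · exact ⟨∅, by simp⟩
  let b := Module.finBasisOfFinrankEq F V h
  refine ⟨univ.image b.innerFlag, ?_, ?_⟩
  · rw [coe_image, coe_univ, Set.image_univ]
    exact inclGraph_isClique_range b.innerFlag_strictMono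
  · rw [card_image_of_injective _ b.innerFlag_strictMono.injective, card_univ, Fintype.card_fin,
      Nat.add_sub_cancel]

end

theorem inclGraph_cliqueNum_general
    (F V : Type*) [Field F] [AddCommGroup V] [Module F V] [FiniteDimensional F V]
    (n : ℕ) (hn : Module.finrank F V = n) :
    (inclGraph F V).cliqueNum = n - 1 := by
  subst hn
  obtain ⟨s, hs⟩ := exists_isNClique_inclGraph_finrank_sub_one (F := F) (V := V)
  exact SimpleGraph.cliqueNum_eq_of_isNClique hs fun _ => card_le_finrank_sub_one_of_isClique

/-- If `dim V = n` with `2 ≤ n < ∞`, the clique number of the subspace inclusion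
graph `In(V)` equals `n - 1`. -/
theorem inclGraph_cliqueNum
    (F V : Type*) [Field F] [AddCommGroup V] [Module F V] [FiniteDimensional F V]
    (n : ℕ) (hn : Module.finrank F V = n) (h2 : 2 ≤ n) :
    (inclGraph F V).cliqueNum = n - 1 :=
  inclGraph_cliqueNum_general F V n hn
end

section
/- Let F_q be a finite field with q elements and V = F_q^n (the space of n-tuples over F_q) with n ≥ 2. For every nontrivial proper subspace W of V, the degree of W in In(V) equals the degree of W^⊥ in In(V), where W^⊥ is the orthogonal complement of W with respect to the standard bilinear form B(α,β) = ∑ᵢ αᵢβᵢ. -/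
/-- The degree of a subspace `W` as a vertex of `In(V)`: the number of nontrivial
proper subspaces comparable with (hence adjacent to) `W`. -/
noncomputable def inDegree (F : Type*) {V : Type*} [Field F] [AddCommGroup V] [Module F V]
    (W : Submodule F V) : ℕ :=
  Nat.card {U : Submodule F V // (U ≠ ⊥ ∧ U ≠ ⊤) ∧ (U < W ∨ W < U)}

/-- Orthogonal complement with respect to the standard bilinear form
`B(α,β) = ∑ i, α i * β i` on `Fin n → F`. -/
def orthComp {F : Type*} [Field F] {n : ℕ} (W : Submodule F (Fin n → F)) :
    Submodule F (Fin n → F) where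
  carrier := {v | ∀ w ∈ W, ∑ i, v i * w i = 0}
  zero_mem' := by intro w _; simp
  add_mem' := by
    intro a b ha hb w hw
    simp [add_mul, Finset.sum_add_distrib, ha w hw, hb w hw]
  smul_mem' := by
    intro c a ha w hw
    simp [smul_eq_mul, mul_assoc, ← Finset.mul_sum, ha w hw]

/-!
Since the dot product is a nondegenerate symmetric form, `W ↦ W^⊥` is an inclusion-reversing
involution of the subspace lattice, i.e. an order isomorphism onto its order dual. Such a map
sends `⊥, ⊤` to `⊤, ⊥` and reverses proper inclusions, so it maps the nontrivial proper
subspaces comparable with `W` bijectively onto those comparable with `W^⊥`.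
-/

open LinearMap (BilinForm)

section DotProduct

variable {R ι : Type*} [CommSemiring R] [Fintype ι]

lemma dotProductBilin_isRefl : BilinForm.IsRefl (dotProductBilin R R : BilinForm R (ι → R)) :=
  fun v w h => by simpa [dotProduct_comm] using h

lemma dotProductBilin_nondegenerate :
    (dotProductBilin R R : BilinForm R (ι → R)).Nondegenerate :=
  ⟨fun _ hv => dotProduct_eq_zero_iff.mp hv,
    fun _ hw => dotProduct_eq_zero_iff.mp fun v => by simpa [dotProduct_comm] using hw v⟩

end DotProduct

section OrthComp

variable {F : Type*} [Field F] {n : ℕ}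

lemma orthComp_eq_orthogonal (W : Submodule F (Fin n → F)) :
    orthComp W = BilinForm.orthogonal (dotProductBilin F F) W := by
  ext v
  simp only [orthComp, BilinForm.mem_orthogonal_iff, dotProductBilin_apply_apply, dotProduct_comm _ v]
  rfl

lemma orthComp_orthComp (W : Submodule F (Fin n → F)) : orthComp (orthComp W) = W := by
  rw [orthComp_eq_orthogonal, orthComp_eq_orthogonal]
  exact BilinForm.orthogonal_orthogonal dotProductBilin_nondegenerate dotProductBilin_isRefl W

lemma orthComp_antitone : Antitone (orthComp (F := F) (n := n)) := fun _ _ h => by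
  rw [orthComp_eq_orthogonal, orthComp_eq_orthogonal]
  exact BilinForm.orthogonal_le h

def orthCompOrderIso : Submodule F (Fin n → F) ≃o (Submodule F (Fin n → F))ᵒᵈ where
  toFun W := OrderDual.toDual (orthComp W)
  invFun W := orthComp (OrderDual.ofDual W)
  left_inv := orthComp_orthComp
  right_inv := orthComp_orthComp
  map_rel_iff' {U W} := by
    change orthComp W ≤ orthComp U ↔ U ≤ W
    exact ⟨fun h => by simpa only [orthComp_orthComp] using orthComp_antitone h,
      fun h => orthComp_antitone h⟩

end OrthComp

theorem inDegree_ofDual_orderIso_apply {F V V' : Type*} [Field F] [AddCommGroup V]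
    [Module F V] [AddCommGroup V'] [Module F V'] (e : Submodule F V ≃o (Submodule F V')ᵒᵈ)
    (W : Submodule F V) : inDegree F (OrderDual.ofDual (e W)) = inDegree F W := by
  refine Nat.card_congr ((e.toEquiv.trans OrderDual.ofDual).subtypeEquiv fun U => ?_).symm
  simp [e.lt_iff_lt, and_comm, or_comm]

theorem inclGraph_degree_orthComp_general
    (F : Type*) [Field F] (n : ℕ)
    (W : Submodule F (Fin n → F)) :
    inDegree F W = inDegree F (orthComp W) :=
  (inDegree_ofDual_orderIso_apply (orthCompOrderIso (F := F) (n := n)) W).symm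

/-- For every nontrivial proper subspace `W` of `F_q^n`, the degree of `W` in `In(V)`
equals the degree of its orthogonal complement `W^⊥`. -/
theorem inclGraph_degree_orthComp
    (F : Type*) [Field F] [Fintype F] (n : ℕ) (hn : 2 ≤ n)
    (W : Submodule F (Fin n → F)) (hW1 : W ≠ ⊥) (hW2 : W ≠ ⊤) :
    inDegree F W = inDegree F (orthComp W) :=
  inclGraph_degree_orthComp_general F n W
end

section
/- Let F_q be a finite field with q elements and let V be an n-dimensional vector space over F_q with n ≥ 2. If W and W' are nontrivial proper subspaces of V with 1 ≤ dim W < dim W' ≤ n/2, then the degree of W' in In(V) is strictly smaller than the degree of W in In(V). -/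
/-!
Write `G m` for the number of subspaces of `Fᵐ`. The neighbours of a `k`-dimensional vertex `W`
are the subspaces strictly between `0` and `W` or between `W` and `V`, so
`deg W = G k + G (n - k) - 4`. The increment `G (m + 1) - G m` counts the subspaces of `Fᵐ × F`
not contained in `Fᵐ × 0`; pushing these forward along `Fᵐ ⊆ Fᵐ⁺¹` and adding the line through
`(e, 1)` with `e ∉ Fᵐ` shows that the increments grow strictly. Hence `G` is strictly convex,
and `k ↦ G k + G (n - k)` is strictly decreasing for `k ≤ n / 2`.
-/

open Module

section DivisionRing

variable (K : Type*) [DivisionRing K]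

noncomputable def galoisNumber (m : ℕ) : ℕ :=
  Nat.card (Submodule K (Fin m → K))

theorem card_submodule_eq_galoisNumber (V : Type*) [AddCommGroup V] [Module K V]
    [Module.Finite K V] : Nat.card (Submodule K V) = galoisNumber K (finrank K V) :=
  Nat.card_congr (Submodule.orderIsoMapComap (LinearEquiv.ofFinrankEq V _ (by simp))).toEquiv

abbrev TransversalSubmodule (V : Type*) [AddCommGroup V] [Module K V] :=
  {U : Submodule K (V × K) // ¬ U ≤ LinearMap.ker (LinearMap.snd K V K)}

variable {K}

instance Submodule.finite_of_finite [Finite K] {V : Type*} [AddCommGroup V] [Module K V]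
    [Module.Finite K V] : Finite (Submodule K V) :=
  have := Module.finite_of_finite K (M := V)
  Finite.of_injective _ SetLike.coe_injective

theorem card_submodule_prod_eq [Finite K] (V : Type*) [AddCommGroup V] [Module K V]
    [Module.Finite K V] :
    Nat.card (Submodule K (V × K)) =
      Nat.card (Submodule K V) + Nat.card (TransversalSubmodule K V) := by
  classical
  have e : Submodule K V ≃ {U : Submodule K (V × K) // U ≤ LinearMap.ker (LinearMap.snd K V K)} :=
    (Submodule.orderIsoMapComap (LinearEquiv.ofInjective _ LinearMap.inl_injective)).toEquiv.trans
      ((Submodule.MapSubtype.orderIso _).toEquiv.trans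
        (Equiv.subtypeEquivRight fun U => by rw [LinearMap.ker_snd]))
  rw [← Nat.card_congr (Equiv.sumCompl (· ≤ LinearMap.ker (LinearMap.snd K V K))), Nat.card_sum,
    Nat.card_congr e]

theorem card_transversalSubmodule_lt [Finite K] {V W : Type*} [AddCommGroup V] [Module K V]
    [AddCommGroup W] [Module K W] [Module.Finite K W] (f : V →ₗ[K] W)
    (hinj : Function.Injective f) (hsurj : ¬ Function.Surjective f) :
    Nat.card (TransversalSubmodule K V) < Nat.card (TransversalSubmodule K W) := by
  set φ := f.prodMap (LinearMap.id : K →ₗ[K] K)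
  have hφ : Function.Injective φ := fun x y h => by
    simp only [φ, LinearMap.prodMap_apply, LinearMap.id_apply, Prod.mk.injEq] at h
    exact Prod.ext (hinj h.1) h.2
  let g : TransversalSubmodule K V → TransversalSubmodule K W := fun U =>
    ⟨U.1.map φ, fun hle => U.2 fun x hx => by simpa [φ] using hle (Submodule.mem_map_of_mem hx)⟩
  have hg : Function.Injective g := fun U U' h =>
    Subtype.ext (Submodule.map_injective_of_injective hφ (congrArg Subtype.val h))
  obtain ⟨w, hw⟩ : ∃ w, w ∉ LinearMap.range f := by
    simpa [Function.Surjective] using hsurj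
  have hw₁ : ¬ K ∙ (w, (1 : K)) ≤ LinearMap.ker (LinearMap.snd K W K) := by
    simp [Submodule.span_singleton_le_iff_mem]
  have hng : ¬ Function.Surjective g := fun h => by
    obtain ⟨U, hU⟩ := h ⟨K ∙ (w, 1), hw₁⟩
    have hmem : (w, (1 : K)) ∈ (g U).1 := by rw [hU]; exact Submodule.mem_span_singleton_self _
    obtain ⟨x, -, hx⟩ := hmem
    exact hw ⟨x.1, congrArg Prod.fst hx⟩
  have := Finite.of_injective g hg
  have := Fintype.ofFinite (TransversalSubmodule K V)
  have := Fintype.ofFinite (TransversalSubmodule K W)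
  simpa only [Nat.card_eq_fintype_card] using Fintype.card_lt_of_injective_not_surjective g hg hng

theorem two_mul_galoisNumber_succ_lt [Finite K] (m : ℕ) :
    2 * galoisNumber K (m + 1) < galoisNumber K m + galoisNumber K (m + 2) := by
  have h₀ := card_submodule_prod_eq (K := K) (Fin m → K)
  have h₁ := card_submodule_prod_eq (K := K) ((Fin m → K) × K)
  have hlt := card_transversalSubmodule_lt (LinearMap.inl K (Fin m → K) K)
    LinearMap.inl_injective fun h => by simpa using h (0, 1)
  simp only [card_submodule_eq_galoisNumber, finrank_prod, finrank_fin_fun, finrank_self,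
    Nat.add_assoc, Nat.reduceAdd] at h₀ h₁
  omega

theorem galoisNumber_succ_add_lt [Finite K] {a c : ℕ} (h : a < c) :
    galoisNumber K (a + 1) + galoisNumber K c < galoisNumber K a + galoisNumber K (c + 1) := by
  have hmono : StrictMono fun m => (galoisNumber K (m + 1) : ℤ) - galoisNumber K m :=
    strictMono_nat_of_lt_succ fun m => by
      have := two_mul_galoisNumber_succ_lt (K := K) m
      simp only [Nat.add_assoc, Nat.reduceAdd]
      omega
  have := hmono h
  simp only at this
  omega

variable (K) in
theorem strictAntiOn_galoisNumber_add_galoisNumber_sub [Finite K] (n : ℕ) :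
    StrictAntiOn (fun k => galoisNumber K k + galoisNumber K (n - k)) (Set.Iic (n / 2)) :=
  strictAntiOn_Iic_of_succ_lt fun k hk => by
    obtain ⟨c, hc⟩ : ∃ c, n - k = c + 1 := ⟨n - k - 1, by omega⟩
    rw [Order.succ_eq_add_one, show n - (k + 1) = c by omega, hc]
    exact galoisNumber_succ_add_lt (by omega)

end DivisionRing

theorem Set.ncard_Ioo_add_two {α : Type*} [PartialOrder α] [Finite α] {a b : α} (h : a < b) :
    (Ioo a b).ncard + 2 = (Icc a b).ncard := by
  rw [← Ioc_insert_left h.le, ← Ioo_insert_right h, ncard_insert_of_notMem, ncard_insert_of_notMem]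
  · simp
  · simp [h.ne]

section inDegree

variable {F V : Type*} [Field F] [AddCommGroup V] [Module F V]

theorem inDegree_eq_ncard_Ioo_add_ncard_Ioo [Finite (Submodule F V)] (W : Submodule F V) :
    inDegree F W = (Set.Ioo ⊥ W).ncard + (Set.Ioo W ⊤).ncard := by
  rw [← Set.ncard_union_eq (Set.disjoint_left.2 fun U h₁ h₂ => lt_asymm h₁.2 h₂.1),
    inDegree, ← Nat.card_coe_set_eq]
  congr
  ext U
  simp only [Set.mem_union, Set.mem_Ioo, bot_lt_iff_ne_bot, lt_top_iff_ne_top]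
  constructor
  · rintro ⟨⟨hb, ht⟩, h | h⟩
    exacts [Or.inl ⟨hb, h⟩, Or.inr ⟨h, ht⟩]
  · rintro (⟨hb, h⟩ | ⟨h, ht⟩)
    exacts [⟨⟨hb, ne_top_of_lt h⟩, Or.inl h⟩, ⟨⟨ne_bot_of_gt h, ht⟩, Or.inr h⟩]

theorem inDegree_add_four [Finite F] [Module.Finite F V] {W : Submodule F V}
    (hW : W ≠ ⊥ ∧ W ≠ ⊤) :
    inDegree F W + 4 = galoisNumber F (finrank F W) + galoisNumber F (finrank F (V ⧸ W)) := by
  have h₁ : (Set.Icc ⊥ W).ncard = galoisNumber F (finrank F W) := by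
    rw [Set.Icc_bot, ← Nat.card_coe_set_eq, ← card_submodule_eq_galoisNumber]
    exact (Nat.card_congr (Submodule.MapSubtype.orderIso W).toEquiv).symm
  have h₂ : (Set.Icc W ⊤).ncard = galoisNumber F (finrank F (V ⧸ W)) := by
    rw [Set.Icc_top, ← Nat.card_coe_set_eq, ← card_submodule_eq_galoisNumber]
    exact (Nat.card_congr (Submodule.comapMkQRelIso W).toEquiv).symm
  rw [inDegree_eq_ncard_Ioo_add_ncard_Ioo, ← h₁, ← h₂,
    ← Set.ncard_Ioo_add_two (bot_lt_iff_ne_bot.2 hW.1),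
    ← Set.ncard_Ioo_add_two (lt_top_iff_ne_top.2 hW.2)]
  ring

end inDegree

theorem inclGraph_degree_strict_anti_general
    (F V : Type*) [Field F] [Fintype F] [AddCommGroup V] [Module F V] [FiniteDimensional F V]
    (n : ℕ) (hn : Module.finrank F V = n)
    (W W' : Submodule F V) (hW : W ≠ ⊥ ∧ W ≠ ⊤) (hW' : W' ≠ ⊥ ∧ W' ≠ ⊤)
    (hlt : Module.finrank F W < Module.finrank F W')
    (hhalf : (Module.finrank F W' : ℚ) ≤ (n : ℚ) / 2) :
    inDegree F W' < inDegree F W := by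
  have hW'half : finrank F W' ≤ n / 2 := by
    have : ((2 * finrank F W' : ℕ) : ℚ) ≤ n := by push_cast; linarith
    have : 2 * finrank F W' ≤ n := by exact_mod_cast this
    omega
  have key := strictAntiOn_galoisNumber_add_galoisNumber_sub F n
    (hlt.le.trans hW'half : finrank F W ≤ n / 2) hW'half hlt
  have hdeg := inDegree_add_four hW
  have hdeg' := inDegree_add_four hW'
  rw [Submodule.finrank_quotient, hn] at hdeg hdeg'
  simp only at key
  omega

/-- If `W`, `W'` are nontrivial proper subspaces with `1 ≤ dim W < dim W' ≤ n/2`,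
then the degree of `W'` in `In(V)` is strictly smaller than the degree of `W`. -/
theorem inclGraph_degree_strict_anti
    (F V : Type*) [Field F] [Fintype F] [AddCommGroup V] [Module F V] [FiniteDimensional F V]
    (n : ℕ) (hn : Module.finrank F V = n) (h2 : 2 ≤ n)
    (W W' : Submodule F V) (hW : W ≠ ⊥ ∧ W ≠ ⊤) (hW' : W' ≠ ⊥ ∧ W' ≠ ⊤)
    (h1 : 1 ≤ Module.finrank F W) (hlt : Module.finrank F W < Module.finrank F W')
    (hhalf : (Module.finrank F W' : ℚ) ≤ (n : ℚ) / 2) :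
    inDegree F W' < inDegree F W :=
  inclGraph_degree_strict_anti_general F V n hn W W' hW hW' hlt hhalf
end

section
/- Let F_q be a finite field and let V be an n-dimensional vector space over F_q with n ≥ 3. Let σ be a graph automorphism of In(V). If σ maps some 1-dimensional subspace of V to a 1-dimensional subspace, then for every nontrivial proper subspace W of V, dim σ(W) = dim W. -/
/-!
Non-adjacent neighbours `Y`, `Z` of a vertex `X` lie on the same side of `X`, and so do their
images under `σ`; hence `σ` preserves the orientation of the edge `XY` iff it preserves that of
`XZ`. Lines are minimal vertices, so `σ` preserves every edge at a line `L₀` whose image is a line.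
Propagating through the plane `L ⊔ L₀` reaches every edge at a line `L`, and propagating through a
line `⟨v⟩ ≤ B` with `v ∉ A` reaches every edge `A < B`. Thus `σ` and `σ⁻¹` are strictly monotone,
and a strictly monotone self-map of the vertices cannot lower the dimension, as it maps a maximal
chain below `W` to a chain below `σ W`.
-/

open Module

theorem Submodule.exists_lt_finrank_add_one {F V : Type*} [Field F] [AddCommGroup V]
    [Module F V] [FiniteDimensional F V] {W : Submodule F V} (hW : W ≠ ⊥) :
    ∃ W' < W, finrank F W' + 1 = finrank F W := by
  obtain ⟨w, hw, hw0⟩ := W.ne_bot_iff.1 hW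
  obtain ⟨C, hC⟩ := (F ∙ (⟨w, hw⟩ : W)).exists_isCompl
  have hrank := Submodule.finrank_add_eq_of_isCompl hC
  rw [finrank_span_singleton (by simpa using hw0)] at hrank
  have hCW : finrank F (C.map W.subtype) = finrank F C := Submodule.finrank_map_subtype_eq W C
  refine ⟨C.map W.subtype, Submodule.lt_of_le_of_finrank_lt_finrank
    (Submodule.map_subtype_le W C) (by omega), by omega⟩

namespace inclGraph

variable {F V : Type*} [Field F] [AddCommGroup V] [Module F V]

theorem not_adj_of_not_le_of_not_le {A B : InVert F V} (hAB : ¬ A ≤ B) (hBA : ¬ B ≤ A) :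
    ¬ (inclGraph F V).Adj A B := by
  rintro (h | h)
  exacts [hAB h.le, hBA h.le]

theorem not_adj_of_isMin {L L' : InVert F V} (hL : IsMin L) (hL' : IsMin L') (hne : L ≠ L') :
    ¬ (inclGraph F V).Adj L L' :=
  not_adj_of_not_le_of_not_le (fun h => hne (le_antisymm h (hL' h)))
    (fun h => hne (le_antisymm (hL h) h))

theorem lt_iff_lt_of_not_adj {X Y Z : InVert F V} (hXY : (inclGraph F V).Adj X Y)
    (hXZ : (inclGraph F V).Adj X Z) (hYZ : ¬ (inclGraph F V).Adj Y Z) : Y < X ↔ Z < X := by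
  rcases hXY with hXY | hYX <;> rcases hXZ with hXZ | hZX
  · exact iff_of_false hXY.not_gt hXZ.not_gt
  · exact (hYZ (Or.inr (hZX.trans hXY))).elim
  · exact (hYZ (Or.inl (hYX.trans hXZ))).elim
  · exact iff_of_true hYX hZX

variable (σ : inclGraph F V ≃g inclGraph F V)

theorem map_lt_map_of_lt_of_not_adj {A B C : InVert F V} (hAC : A < C) (hBC : B < C)
    (hAB : ¬ (inclGraph F V).Adj A B) (h : σ A < σ C) : σ B < σ C := by
  have adj {X Y : InVert F V} (hXY : X < Y) : (inclGraph F V).Adj (σ Y) (σ X) :=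
    σ.map_adj_iff.2 (Or.inr hXY)
  exact (lt_iff_lt_of_not_adj (adj hAC) (adj hBC) (mt σ.map_adj_iff.1 hAB)).1 h

theorem map_lt_map_of_gt_of_not_adj {A B C : InVert F V} (hAB : A < B) (hAC : A < C)
    (hBC : ¬ (inclGraph F V).Adj B C) (h : σ A < σ B) : σ A < σ C := by
  have adj {X Y : InVert F V} (hXY : X < Y) : (inclGraph F V).Adj (σ X) (σ Y) :=
    σ.map_adj_iff.2 (Or.inl hXY)
  have hCA : ¬ σ C < σ A :=
    (lt_iff_lt_of_not_adj (adj hAB) (adj hAC) (mt σ.map_adj_iff.1 hBC)).not.1 h.not_gt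
  exact (adj hAC).resolve_right hCA

theorem map_lt_map_of_isMin {L B : InVert F V} (hL : IsMin (σ L)) (hLB : L < B) :
    σ L < σ B :=
  (σ.map_adj_iff.2 (Or.inl hLB)).resolve_right hL.not_lt

theorem strictMono_symm (hσ : StrictMono σ) : StrictMono σ.symm := fun X Y hXY =>
  (σ.symm.map_adj_iff.2 (Or.inl hXY)).resolve_right fun h =>
    lt_asymm hXY (by simpa using hσ h)

variable [FiniteDimensional F V]

theorem isMin_of_finrank_eq_one {L : InVert F V} (hL : finrank F L.1 = 1) : IsMin L := by
  intro A hAL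
  by_contra hLA
  have hrank := Submodule.finrank_lt_finrank_of_lt (lt_of_le_not_ge hAL hLA)
  exact A.2.1 (Submodule.finrank_eq_zero.1 (by omega))

theorem map_lt_map_of_finrank_eq_one {L₀ : InVert F V} (hL₀ : finrank F L₀.1 = 1)
    (hσL₀ : finrank F (σ L₀).1 = 1) {L B : InVert F V} (hL : finrank F L.1 = 1)
    (hLB : L < B) : σ L < σ B := by
  have hL₀min := isMin_of_finrank_eq_one hL₀
  have hσL₀min := isMin_of_finrank_eq_one hσL₀
  have of_le {C : InVert F V} (hLC : L < C) (hL₀C : L₀ ≤ C) : σ L < σ C := by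
    by_cases hLL₀ : L = L₀
    · subst hLL₀
      exact map_lt_map_of_isMin σ hσL₀min hLC
    have hL₀C' : L₀ < C := lt_of_le_of_ne hL₀C (by rintro rfl; exact hL₀min.not_lt hLC)
    exact map_lt_map_of_lt_of_not_adj σ hL₀C' hLC
      (not_adj_of_isMin hL₀min (isMin_of_finrank_eq_one hL) (Ne.symm hLL₀))
      (map_lt_map_of_isMin σ hσL₀min hL₀C')
  by_cases hL₀B : L₀ ≤ B
  · exact of_le hLB hL₀B
  -- `dim B ≥ 2 ≥ dim (L ⊔ L₀)`; this is also what makes `L ⊔ L₀` a proper subspace.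
  have hBM : ¬ B.1 ≤ L.1 ⊔ L₀.1 := fun h => by
    have hrank := Submodule.finrank_add_le_finrank_add_finrank L.1 L₀.1
    have hLB' := Submodule.finrank_lt_finrank_of_lt hLB
    exact hL₀B (le_sup_right.trans (Submodule.eq_of_le_of_finrank_le h (by omega)).ge)
  let M : InVert F V := ⟨L.1 ⊔ L₀.1, fun h => L.2.1 (sup_eq_bot_iff.1 h).1,
    fun h => hBM (h.symm ▸ le_top)⟩
  have hLM : L < M := lt_of_le_not_ge (show L.1 ≤ M.1 from le_sup_left) fun h =>
    hL₀B (show L₀.1 ≤ B.1 from le_sup_right.trans (h.trans hLB.le))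
  exact map_lt_map_of_gt_of_not_adj σ hLM hLB
    (not_adj_of_not_le_of_not_le
      (fun h => hL₀B (show L₀.1 ≤ B.1 from le_sup_right.trans h)) hBM)
    (of_le hLM (show L₀.1 ≤ M.1 from le_sup_right))

theorem strictMono_of_finrank_eq_one {L₀ : InVert F V} (hL₀ : finrank F L₀.1 = 1)
    (hσL₀ : finrank F (σ L₀).1 = 1) : StrictMono σ := by
  intro A B hAB
  obtain ⟨v, hvB, hvA⟩ := SetLike.exists_of_lt (show A.1 < B.1 from hAB)
  have hv0 : v ≠ 0 := fun h => hvA (h ▸ A.1.zero_mem)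
  have hvB' : (F ∙ v) ≤ B.1 := (Submodule.span_singleton_le_iff_mem v B.1).2 hvB
  let L : InVert F V := ⟨F ∙ v, Submodule.span_singleton_eq_bot.not.2 hv0,
    fun h => B.2.2 (top_le_iff.1 (h.symm.trans_le hvB'))⟩
  have hL : finrank F L.1 = 1 := finrank_span_singleton hv0
  have hLmin := isMin_of_finrank_eq_one hL
  have hLB : L < B := lt_of_le_not_ge hvB' fun h => hLmin.not_lt (hAB.trans_le h)
  have hLA : ¬ (inclGraph F V).Adj L A := not_adj_of_not_le_of_not_le
    (fun h => hvA ((Submodule.span_singleton_le_iff_mem v A.1).1 h))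
    (fun h => hvA ((Submodule.span_singleton_le_iff_mem v A.1).1 (hLmin h)))
  exact map_lt_map_of_lt_of_not_adj σ hLB hAB hLA
    (map_lt_map_of_finrank_eq_one σ hL₀ hσL₀ hL hLB)

theorem finrank_le_finrank_apply_of_strictMono {τ : InVert F V → InVert F V}
    (hτ : StrictMono τ) (W : InVert F V) : finrank F W.1 ≤ finrank F (τ W).1 := by
  induction hW : finrank F W.1 generalizing W with
  | zero => omega
  | succ k ih =>
    obtain rfl | hk := k.eq_zero_or_pos
    · exact Submodule.one_le_finrank_iff.2 (τ W).2.1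
    obtain ⟨U, hUW, hU⟩ := Submodule.exists_lt_finrank_add_one W.2.1
    have hU0 : U ≠ ⊥ := Submodule.one_le_finrank_iff.1 (by omega)
    let U' : InVert F V := ⟨U, hU0, (hUW.trans_le le_top).ne⟩
    have hτU := ih U' (by simp only [U']; omega)
    have hτUW := Submodule.finrank_lt_finrank_of_lt (hτ (show U' < W from hUW))
    omega

end inclGraph

theorem inclGraph_aut_dim_preserving_general
    (F V : Type*) [Field F] [AddCommGroup V] [Module F V] [FiniteDimensional F V]
    (σ : inclGraph F V ≃g inclGraph F V)
    (h : ∃ L : InVert F V, Module.finrank F L.1 = 1 ∧ Module.finrank F (σ L).1 = 1) :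
    ∀ W : InVert F V, Module.finrank F (σ W).1 = Module.finrank F W.1 := by
  obtain ⟨L₀, hL₀, hσL₀⟩ := h
  have hσ := inclGraph.strictMono_of_finrank_eq_one σ hL₀ hσL₀
  intro W
  refine le_antisymm ?_ (inclGraph.finrank_le_finrank_apply_of_strictMono hσ W)
  have hσ_symm := inclGraph.finrank_le_finrank_apply_of_strictMono
    (inclGraph.strictMono_symm σ hσ) (σ W)
  rwa [σ.symm_apply_apply] at hσ_symm

/-- If a graph automorphism of `In(V)` maps some 1-dimensional subspace to a
1-dimensional subspace, then it preserves the dimension of every vertex. -/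
theorem inclGraph_aut_dim_preserving
    (F V : Type*) [Field F] [Fintype F] [AddCommGroup V] [Module F V] [FiniteDimensional F V]
    (hn : 3 ≤ Module.finrank F V)
    (σ : inclGraph F V ≃g inclGraph F V)
    (h : ∃ L : InVert F V, Module.finrank F L.1 = 1 ∧ Module.finrank F (σ L).1 = 1) :
    ∀ W : InVert F V, Module.finrank F (σ W).1 = Module.finrank F W.1 :=
  inclGraph_aut_dim_preserving_general F V σ h
end

section
/- Let F_q be a finite field, V = F_q^n with n ≥ 3, and let e₁, …, eₙ be the standard basis of V. Let σ be a graph automorphism of In(V), let 1 ≤ k ≤ n, suppose σ maps [e₁] to a 1-dimensional subspace, and suppose σ fixes [eᵢ] for every i with 1 ≤ i ≤ k − 1. Then there exists an invertible n×n matrix A over F_q such that the composition θ_A ∘ σ fixes [e_j] for every j with 1 ≤ j ≤ k, where θ_A is the automorphism of In(V) sending each subspace W to its image {Aw : w ∈ W} under the linear map determined by A. -/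
/-!
For `k ≥ 2` the atom `[e₁]` is fixed by `σ`, and an automorphism fixing an atom `a` maps atoms
to atoms: for an atom `x ≠ a`, the vertex `m = a ⊔ x` is a common neighbour of `a` and `x` such
that every common neighbour of `a` and `m` is adjacent to `x`, and by modularity a vertex
incomparable with `a` that admits such an `m` is an atom. (For `k = 1` this is the hypothesis on
`[e₁]`.) The span `N` of the fixed atoms `[e₁], …, [e_{k-1}]` satisfies `N ≤ σ N`, so an atom
outside `N` is not sent into `N`. Hence `σ [e_k] = [v]` with `v ∉ N`, and a linear automorphism
fixing `N` pointwise and sending `v` to `e_k` gives `A`.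
-/

open Module Submodule

section LinearAlgebra

theorem Submodule.exists_eq_span_singleton_of_isAtom {R M : Type*} [Semiring R]
    [AddCommMonoid M] [Module R M] {p : Submodule R M} (hp : IsAtom p) : ∃ v, p = span R {v} := by
  obtain ⟨v, hv, hv0⟩ := (Submodule.ne_bot_iff p).1 hp.ne_bot
  refine ⟨v, ((hp.le_iff_eq ?_).1 ((span_singleton_le_iff_mem _ _).2 hv)).symm⟩
  rwa [Ne, span_singleton_eq_bot]

variable {K V : Type*} [DivisionRing K] [AddCommGroup V] [Module K V] [FiniteDimensional K V]

theorem LinearIndependent.exists_linearEquiv_apply_eq {ι : Type*} {f g : ι → V}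
    (hf : LinearIndependent K f) (hg : LinearIndependent K g) :
    ∃ e : V ≃ₗ[K] V, ∀ i, e (f i) = g i := by
  obtain ⟨e, he⟩ :=
    exists_linearEquiv_restrict_eq ((Basis.span hf).equiv (Basis.span hg) (Equiv.refl ι))
  refine ⟨e, fun i => ?_⟩
  have := he (Basis.span hf i)
  rw [Basis.equiv_apply, Basis.span_apply, Basis.span_apply] at this
  exact this.symm

theorem Submodule.exists_linearEquiv_eqOn_apply_eq (N : Submodule K V) {v w : V}
    (hv : v ∉ N) (hw : w ∉ N) : ∃ e : V ≃ₗ[K] V, (∀ x ∈ N, e x = x) ∧ e v = w := by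
  let b := Basis.ofVectorSpace K N
  have hspan : span K (Set.range (N.subtype ∘ b)) = N := by
    rw [Set.range_comp, span_image, b.span_eq, map_subtype_top]
  have hind : ∀ u ∉ N, LinearIndependent K (fun o : Option _ => o.elim u (N.subtype ∘ b)) :=
    fun u hu => linearIndependent_option.2
      ⟨b.linearIndependent.map' _ N.ker_subtype, by
        change u ∉ span K (Set.range (N.subtype ∘ b)); rwa [hspan]⟩
  obtain ⟨e, he⟩ := (hind v hv).exists_linearEquiv_apply_eq (hind w hw)
  have hN : e.toLinearMap ∘ₗ N.subtype = N.subtype := b.ext fun i => he (some i)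
  exact ⟨e, fun x hx => LinearMap.congr_fun hN ⟨x, hx⟩, he none⟩

theorem Submodule.sup_ne_top_of_isAtom (hV : 3 ≤ finrank K V) {p q : Submodule K V}
    (hp : IsAtom p) (hq : IsAtom q) : p ⊔ q ≠ ⊤ := by
  intro h
  have := finrank_add_le_finrank_add_finrank p q
  rw [h, finrank_top, isAtom_iff_finrank_eq_one.1 hp, isAtom_iff_finrank_eq_one.1 hq] at this
  omega

end LinearAlgebra

theorem LinearEquiv.isUnit_toMatrix' {R n : Type*} [CommRing R] [Fintype n] [DecidableEq n]
    (e : (n → R) ≃ₗ[R] (n → R)) : IsUnit (LinearMap.toMatrix' e.toLinearMap) :=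
  LinearMap.isUnit_toMatrix'_iff.2 ((Module.End.isUnit_iff _).2 e.bijective)

namespace SimpleGraph

variable {α β : Type*} {G : SimpleGraph α} {G' : SimpleGraph β}

def IsJoinWitness (G : SimpleGraph α) (a y m : α) : Prop :=
  G.Adj a m ∧ G.Adj y m ∧ ∀ u, G.Adj u a → G.Adj u m → G.Adj u y

theorem IsJoinWitness.map (σ : G ≃g G') {a y m : α} (h : G.IsJoinWitness a y m) :
    G'.IsJoinWitness (σ a) (σ y) (σ m) := by
  refine ⟨σ.map_adj_iff.2 h.1, σ.map_adj_iff.2 h.2.1, fun u hua hum => ?_⟩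
  have := h.2.2 (σ.symm u) (by simpa using σ.symm.map_adj_iff.2 hua)
    (by simpa using σ.symm.map_adj_iff.2 hum)
  simpa using σ.map_adj_iff.2 this

end SimpleGraph

section InclusionGraph

variable {F V : Type*} [Field F] [AddCommGroup V] [Module F V]

def InVert.ofIsAtom (hV : 2 ≤ finrank F V) {p : Submodule F V} (hp : IsAtom p) :
    InVert F V :=
  ⟨p, hp.ne_bot, fun h => by
    rw [isAtom_iff_finrank_eq_one, h, finrank_top] at hp
    omega⟩

theorem lt_of_inclGraph_adj_of_isAtom {a W : InVert F V} (ha : IsAtom a.1)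
    (h : (inclGraph F V).Adj a W) : a.1 < W.1 :=
  h.resolve_right fun hW => W.2.1 (ha.lt_iff.1 hW)

theorem inclGraph_not_adj_of_isAtom {a b : InVert F V} (ha : IsAtom a.1) (hb : IsAtom b.1) :
    ¬ (inclGraph F V).Adj a b :=
  fun h => ha.ne_bot (hb.lt_iff.1 (lt_of_inclGraph_adj_of_isAtom ha h))

theorem inclGraph_isJoinWitness_sup {a y : InVert F V} (ha : IsAtom a.1) (hy : IsAtom y.1)
    (hay : a ≠ y) (htop : a.1 ⊔ y.1 ≠ ⊤) :
    (inclGraph F V).IsJoinWitness a y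
      ⟨a.1 ⊔ y.1, (ha.bot_lt.trans_le le_sup_left).ne', htop⟩ := by
  have hdisj : Disjoint a.1 y.1 := ha.disjoint_of_ne hy (Subtype.coe_injective.ne hay)
  have hcov : a.1 ⋖ a.1 ⊔ y.1 :=
    covBy_sup_of_inf_covBy_right (by rw [hdisj.eq_bot]; exact hy.bot_covBy)
  refine ⟨Or.inl hcov.lt, Or.inl (right_lt_sup.2 (ha.not_le_iff_disjoint.2 hdisj)),
    fun u hua hum => ?_⟩
  have hau := lt_of_inclGraph_adj_of_isAtom ha hua.symm
  rcases hum with hum | hum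
  · exact absurd hum (hcov.2 hau)
  · exact Or.inr (le_sup_right.trans_lt hum)

theorem isAtom_of_inclGraph_isJoinWitness {a y m : InVert F V} (ha : IsAtom a.1) (hay : a ≠ y)
    (hnadj : ¬ (inclGraph F V).Adj a y) (h : (inclGraph F V).IsJoinWitness a y m) :
    IsAtom y.1 := by
  obtain ⟨ham, hym, hcommon⟩ := h
  have ham := lt_of_inclGraph_adj_of_isAtom ha ham
  have hay' : ¬ a.1 ≤ y.1 := fun hle =>
    hnadj (Or.inl (hle.lt_of_ne (Subtype.coe_injective.ne hay)))
  have hym : y.1 < m.1 := hym.resolve_right fun hmy => hay' (ham.le.trans hmy.le)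
  have hdisj : Disjoint a.1 y.1 := ha.not_le_iff_disjoint.1 hay'
  refine ⟨y.2.1, fun z hzy => by_contra fun hz => ?_⟩
  -- `a ⊔ z` lies strictly between `a` and `m`, but is comparable with `y` only if `z = y`.
  have hza : ¬ z ≤ a.1 := fun hza => hz (le_bot_iff.1 (hdisj hza hzy.le))
  have hyU : ¬ y.1 ≤ a.1 ⊔ z := fun hle => hzy.ne <|
    calc z = z ⊔ a.1 ⊓ y.1 := by rw [hdisj.eq_bot, sup_bot_eq]
      _ = (z ⊔ a.1) ⊓ y.1 := (sup_inf_assoc_of_le _ hzy.le).symm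
      _ = y.1 := inf_eq_right.2 (sup_comm a.1 z ▸ hle)
  have hUm : a.1 ⊔ z < m.1 :=
    (sup_le ham.le (hzy.le.trans hym.le)).lt_of_ne fun h => hyU (h ▸ hym.le)
  let U : InVert F V :=
    ⟨a.1 ⊔ z, (ha.bot_lt.trans_le le_sup_left).ne', (hUm.trans_le le_top).ne⟩
  rcases hcommon U (Or.inr (left_lt_sup.2 hza)) (Or.inl hUm) with hUy | hyU'
  · exact hay' (le_sup_left.trans hUy.le)
  · exact hyU hyU'.le

theorem isAtom_map_of_isAtom_fixed [FiniteDimensional F V] (hV : 3 ≤ finrank F V)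
    (σ : inclGraph F V ≃g inclGraph F V) {a x : InVert F V} (ha : IsAtom a.1) (hσa : σ a = a)
    (hx : IsAtom x.1) (hxa : x ≠ a) : IsAtom (σ x).1 := by
  have h := (inclGraph_isJoinWitness_sup ha hx hxa.symm (sup_ne_top_of_isAtom hV ha hx)).map σ
  rw [hσa] at h
  have hay : a ≠ σ x := fun h' => hxa (σ.injective (h'.symm.trans hσa.symm))
  refine isAtom_of_inclGraph_isJoinWitness ha hay ?_ h
  rw [← hσa, σ.map_adj_iff]
  exact inclGraph_not_adj_of_isAtom ha hx

theorem le_map_of_eq_iSup_isAtom_fixed (σ : inclGraph F V ≃g inclGraph F V)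
    {S : Set (InVert F V)} (hS : ∀ s ∈ S, IsAtom s.1 ∧ σ s = s) {W : InVert F V}
    (hW : W.1 = ⨆ s ∈ S, s.1) : W.1 ≤ (σ W).1 := by
  refine hW ▸ iSup₂_le fun s hs => ?_
  obtain ⟨hsa, hσs⟩ := hS s hs
  rcases (hW ▸ le_iSup₂ (f := fun s _ => s.1) s hs : s.1 ≤ W.1).eq_or_lt with h | h
  · rw [← Subtype.ext h, hσs]
  · have hadj := σ.map_adj_iff.2 (Or.inl h : (inclGraph F V).Adj s W)
    rw [hσs] at hadj
    exact (lt_of_inclGraph_adj_of_isAtom hsa hadj).le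

theorem not_map_le_of_le_map (σ : inclGraph F V ≃g inclGraph F V) {W x : InVert F V}
    (hW : W.1 ≤ (σ W).1) (hx : IsAtom x.1) (hxW : ¬ x.1 ≤ W.1) : ¬ (σ x).1 ≤ W.1 := by
  intro h
  have hne : (σ x).1 ≠ (σ W).1 :=
    Subtype.coe_injective.ne (σ.injective.ne fun h' => hxW (h' ▸ le_rfl))
  have hadj : (inclGraph F V).Adj x W := σ.map_adj_iff.1 (Or.inl ((h.trans hW).lt_of_ne hne))
  exact hxW (lt_of_inclGraph_adj_of_isAtom hx hadj).le

theorem not_map_le_iSup_isAtom_fixed (σ : inclGraph F V ≃g inclGraph F V)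
    {S : Set (InVert F V)} (hS : ∀ s ∈ S, IsAtom s.1 ∧ σ s = s) {x : InVert F V}
    (hx : IsAtom x.1) (hxS : ¬ x.1 ≤ ⨆ s ∈ S, s.1) : ¬ (σ x).1 ≤ ⨆ s ∈ S, s.1 := by
  by_cases hbot : ⨆ s ∈ S, s.1 = ⊥
  · rw [hbot, le_bot_iff]
    exact (σ x).2.1
  · have htop : ⨆ s ∈ S, s.1 ≠ ⊤ := fun h => hxS (by rw [h]; exact le_top)
    exact not_map_le_of_le_map σ (W := ⟨_, hbot, htop⟩)
      (le_map_of_eq_iSup_isAtom_fixed σ hS rfl) hx hxS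

theorem exists_linearEquiv_map_eq_of_isAtom_fixed [FiniteDimensional F V]
    (σ : inclGraph F V ≃g inclGraph F V) {S : Set (InVert F V)}
    (hS : ∀ s ∈ S, IsAtom s.1 ∧ σ s = s) {x : InVert F V} (hx : IsAtom x.1)
    (hσx : IsAtom (σ x).1) (hxS : ¬ x.1 ≤ ⨆ s ∈ S, s.1) :
    ∃ g : V ≃ₗ[F] V,
      (∀ s ∈ S, map g.toLinearMap (σ s).1 = s.1) ∧ map g.toLinearMap (σ x).1 = x.1 := by
  obtain ⟨u, hu⟩ := exists_eq_span_singleton_of_isAtom hx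
  obtain ⟨v, hv⟩ := exists_eq_span_singleton_of_isAtom hσx
  have huS : u ∉ ⨆ s ∈ S, s.1 := fun h => hxS (hu ▸ (span_singleton_le_iff_mem _ _).2 h)
  have hvS : v ∉ ⨆ s ∈ S, s.1 := fun h =>
    not_map_le_iSup_isAtom_fixed σ hS hx hxS (hv ▸ (span_singleton_le_iff_mem _ _).2 h)
  obtain ⟨g, hgS, hgv⟩ := exists_linearEquiv_eqOn_apply_eq _ hvS huS
  refine ⟨g, fun s hs => ?_, ?_⟩
  · obtain ⟨w, hw⟩ := exists_eq_span_singleton_of_isAtom (hS s hs).1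
    have hwS : w ∈ ⨆ s ∈ S, s.1 :=
      le_iSup₂ (f := fun s (_ : s ∈ S) => s.1) s hs (hw ▸ mem_span_singleton_self w)
    rw [(hS s hs).2, hw, map_span, Set.image_singleton, LinearEquiv.coe_coe, hgS w hwS]
  · rw [hv, hu, map_span, Set.image_singleton, LinearEquiv.coe_coe, hgv]

end InclusionGraph

theorem single_notMem_iSup_of_forall_eq_span_single {F ι : Type*} [Field F] [DecidableEq ι]
    {S : Set (InVert F (ι → F))} {i : ι}
    (hS : ∀ s ∈ S, ∃ j ≠ i, s.1 = span F {Pi.single j 1}) :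
    Pi.single i (1 : F) ∉ ⨆ s ∈ S, s.1 := by
  have hN : ⨆ s ∈ S, s.1 ≤ LinearMap.ker (LinearMap.proj i) := iSup₂_le fun s hs => by
    obtain ⟨j, hji, hs⟩ := hS s hs
    rw [hs, span_singleton_le_iff_mem, LinearMap.mem_ker, LinearMap.proj_apply,
      Pi.single_eq_of_ne hji.symm]
  exact fun h => by simpa using hN h

/-- If a graph automorphism `σ` of `In(F_q^n)` maps `[e₁]` to a 1-dimensional subspace
and fixes `[e₁], …, [e_{k-1}]`, then there is an invertible matrix `A` such that
`θ_A ∘ σ` fixes `[e₁], …, [e_k]`, where `θ_A` maps each subspace to its image under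
the linear map determined by `A`. -/
theorem inclGraph_aut_exists_matrix_fixing
    (F : Type*) [Field F] (n : ℕ) (hn : 3 ≤ n) (k : ℕ) (hk2 : k ≤ n)
    (σ : inclGraph F (Fin n → F) ≃g inclGraph F (Fin n → F))
    (h1 : ∀ w : InVert F (Fin n → F),
      w.1 = Submodule.span F {Pi.single (⟨0, by omega⟩ : Fin n) (1 : F)} → Module.finrank F (σ w).1 = 1)
    (hfix : ∀ (w : InVert F (Fin n → F)) (i : Fin n), (i : ℕ) < k - 1 →
      w.1 = Submodule.span F {Pi.single i (1 : F)} → (σ w).1 = w.1) :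
    ∃ A : Matrix (Fin n) (Fin n) F, IsUnit A ∧
      ∀ (w : InVert F (Fin n → F)) (j : Fin n), (j : ℕ) < k →
        w.1 = Submodule.span F {Pi.single j (1 : F)} →
          Submodule.map A.mulVecLin (σ w).1 = w.1 := by
  have hV : 3 ≤ finrank F (Fin n → F) := by rwa [finrank_fin_fun]
  have hline : ∀ i : Fin n, IsAtom (span F {(Pi.single i 1 : Fin n → F)}) := fun i =>
    isAtom_iff_finrank_eq_one.2 (finrank_span_singleton (by simp))
  let line (i : Fin n) : InVert F (Fin n → F) := InVert.ofIsAtom (by omega) (hline i)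
  let S : Set (InVert F (Fin n → F)) :=
    {w | ∃ i : Fin n, (i : ℕ) < k - 1 ∧ w.1 = span F {Pi.single i 1}}
  have hS : ∀ s ∈ S, IsAtom s.1 ∧ σ s = s := fun s ⟨i, hi, hs⟩ =>
    ⟨hs ▸ hline i, Subtype.ext (hfix s i hi hs)⟩
  let last : Fin n := ⟨k - 1, by omega⟩
  have hlast : ¬ (line last).1 ≤ ⨆ s ∈ S, s.1 := fun h =>
    single_notMem_iSup_of_forall_eq_span_single
      (fun s (⟨j, hj, hs⟩ : s ∈ S) => ⟨j, Fin.ne_of_lt hj, hs⟩) (h (mem_span_singleton_self _))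
  have hσlast : IsAtom (σ (line last)).1 := by
    rcases Nat.lt_or_ge k 2 with hk | hk
    · have hfirst : last = ⟨0, by omega⟩ := Fin.ext (by simp [last]; omega)
      exact isAtom_iff_finrank_eq_one.2 (h1 _ (by rw [← hfirst]; rfl))
    · let first : Fin n := ⟨0, by omega⟩
      have hfirst : line first ∈ S := ⟨first, by simp [first]; omega, rfl⟩
      refine isAtom_map_of_isAtom_fixed hV σ (hline first) (hS _ hfirst).2 (hline last) ?_
      intro h
      exact hlast (h ▸ le_iSup₂ (f := fun s (_ : s ∈ S) => s.1) _ hfirst)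
  obtain ⟨g, hgS, hglast⟩ :=
    exists_linearEquiv_map_eq_of_isAtom_fixed σ hS (hline last) hσlast hlast
  refine ⟨LinearMap.toMatrix' g.toLinearMap, g.isUnit_toMatrix', fun w j hj hw => ?_⟩
  rw [← Matrix.toLin'_apply', Matrix.toLin'_toMatrix']
  rcases Nat.lt_or_ge j (k - 1) with hj' | hj'
  · exact hgS w ⟨j, hj', hw⟩
  · obtain rfl : w = line last := Subtype.ext (by rw [hw]; congr; ext; simp [last]; omega)
    exact hglast
end

section
/- Let F_q be a finite field, V = F_q^n with n ≥ 3, and let e₁, …, eₙ be the standard basis of V. Let σ be a graph automorphism of In(V) that fixes [eᵢ] for every i = 1, …, n. Suppose α = ∑ᵢ aᵢeᵢ is a nonzero vector of V and σ([α]) = [β] with β = ∑ᵢ bᵢeᵢ. Then for every k with 1 ≤ k ≤ n, b_k = 0 if and only if a_k = 0. -/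
open Module Submodule LinearMap

namespace inclGraph

variable {F V : Type*} [Field F] [AddCommGroup V] [Module F V]

lemma adj_iff_lt_of_isAtom {u v : InVert F V} (hu : IsAtom u.1) :
    (inclGraph F V).Adj u v ↔ u.1 < v.1 :=
  ⟨fun h => h.resolve_right fun hvu => v.2.1 (hu.lt_iff.mp hvu), Or.inl⟩

lemma adj_iff_lt_of_isCoatom {u v : InVert F V} (hv : IsCoatom v.1) :
    (inclGraph F V).Adj u v ↔ u.1 < v.1 :=
  ⟨fun h => h.resolve_right fun hvu => u.2.2 (hv.lt_iff.mp hvu), Or.inl⟩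

lemma lt_map_of_isAtom {σ : inclGraph F V ≃g inclGraph F V} {u v : InVert F V}
    (hu : IsAtom u.1) (hσu : σ u = u) (huv : u.1 < v.1) : u.1 < (σ v).1 := by
  have := σ.map_adj_iff.mpr (Or.inl huv : (inclGraph F V).Adj u v)
  rwa [hσu, adj_iff_lt_of_isAtom hu] at this

lemma map_eq_of_isCoatom_of_le_iSup {ι : Sort*} (σ : inclGraph F V ≃g inclGraph F V)
    {v : InVert F V} (hv : IsCoatom v.1) {p : ι → Submodule F V} (hp : ∀ i, IsAtom (p i))
    (hpv : ∀ i, p i < v.1) (hvp : v.1 ≤ ⨆ i, p i)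
    (hσp : ∀ i (u : InVert F V), u.1 = p i → (σ u).1 = u.1) : (σ v).1 = v.1 := by
  have hle : v.1 ≤ (σ v).1 := hvp.trans <| iSup_le fun i => by
    let u : InVert F V := ⟨p i, (hp i).1, ne_top_of_lt (hpv i)⟩
    exact (lt_map_of_isAtom (u := u) (hp i) (Subtype.ext (hσp i u rfl)) (hpv i)).le
  exact (hv.le_iff.mp hle).resolve_left (σ v).2.2

end inclGraph

namespace Submodule

variable {F V : Type*} [Field F] [AddCommGroup V] [Module F V]

lemma span_singleton_lt_iff_mem_of_isCoatom [FiniteDimensional F V] (hV : 2 < finrank F V)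
    {H : Submodule F V} (hH : IsCoatom H) {x : V} : span F {x} < H ↔ x ∈ H := by
  rw [lt_iff_le_and_ne, span_singleton_le_iff_mem, and_iff_left_iff_imp]
  rintro - rfl
  obtain ⟨y, -, hy⟩ := SetLike.exists_of_lt hH.lt_top
  have hsum := finrank_add_eq_of_isCompl (isCompl_span_singleton_of_isCoatom_of_notMem hH hy)
  have hline : ∀ z : V, finrank F (span F {z}) ≤ 1 := fun z =>
    (finrank_span_le_card {z}).trans (by simp)
  have := hline x
  have := hline y
  omega

end Submodule

namespace LinearMap

variable {F ι : Type*} [Field F]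

lemma isCoatom_ker_proj (k : ι) : IsCoatom (ker (proj k : (ι → F) →ₗ[F] F)) :=
  isCoatom_ker_of_surjective (proj_surjective k)

lemma ker_proj_le_iSup_span_single [Finite ι] [DecidableEq ι] (k : ι) :
    ker (proj k : (ι → F) →ₗ[F] F) ≤ ⨆ i : {i // i ≠ k}, span F {Pi.single i.1 (1 : F)} := by
  have := iInf_ker_proj_le_iSup_range_single F (fun _ : ι => F) (Set.toFinite {k}ᶜ)
    (isCompl_compl.symm.codisjoint)
  simp only [Set.mem_compl_iff, Set.mem_singleton_iff, iInf_iInf_eq_left] at this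
  refine this.trans (iSup₂_le fun i hi => ?_)
  refine le_trans ?_ (le_iSup _ ⟨i, hi⟩)
  rintro _ ⟨c, rfl⟩
  exact mem_span_singleton.mpr ⟨c, by simp [← Pi.single_smul]⟩

end LinearMap

theorem inclGraph_aut_support_preserving_general
    (F : Type*) [Field F] (n : ℕ) (hn : 3 ≤ n)
    (σ : inclGraph F (Fin n → F) ≃g inclGraph F (Fin n → F))
    (hfix : ∀ (w : InVert F (Fin n → F)) (i : Fin n),
      w.1 = Submodule.span F {Pi.single i (1 : F)} → (σ w).1 = w.1)
    (w : InVert F (Fin n → F)) (a b : Fin n → F)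
    (hwa : w.1 = Submodule.span F {a}) (hwb : (σ w).1 = Submodule.span F {b}) :
    ∀ k : Fin n, b k = 0 ↔ a k = 0 := by
  intro k
  have hH : IsCoatom (ker (proj k : (Fin n → F) →ₗ[F] F)) := isCoatom_ker_proj k
  have hlt (x : Fin n → F) : span F {x} < ker (proj k) ↔ x k = 0 :=
    span_singleton_lt_iff_mem_of_isCoatom (by rwa [finrank_fin_fun]) hH
  let v : InVert F (Fin n → F) := ⟨_, ne_bot_of_gt ((hlt 0).mpr rfl), hH.1⟩
  have hσv : (σ v).1 = v.1 :=
    inclGraph.map_eq_of_isCoatom_of_le_iSup σ hH (fun i => nonzero_span_atom _ (by simp))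
      (fun i => (hlt _).mpr (Pi.single_eq_of_ne i.2.symm _)) (ker_proj_le_iSup_span_single k)
      (fun i u hu => hfix u i hu)
  calc b k = 0 ↔ (σ w).1 < (σ v).1 := by rw [hσv, hwb, hlt]
    _ ↔ (inclGraph F _).Adj (σ w) (σ v) := (inclGraph.adj_iff_lt_of_isCoatom (hσv ▸ hH)).symm
    _ ↔ (inclGraph F _).Adj w v := σ.map_adj_iff
    _ ↔ a k = 0 := by rw [inclGraph.adj_iff_lt_of_isCoatom hH, hwa, hlt]

/-- If a graph automorphism `σ` of `In(F_q^n)` fixes `[eᵢ]` for every `i`, and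
`σ([α]) = [β]` for a nonzero vector `α = ∑ aᵢeᵢ` with `β = ∑ bᵢeᵢ`, then
`b_k = 0 ↔ a_k = 0` for every `k`. -/
theorem inclGraph_aut_support_preserving
    (F : Type*) [Field F] [Fintype F] (n : ℕ) (hn : 3 ≤ n)
    (σ : inclGraph F (Fin n → F) ≃g inclGraph F (Fin n → F))
    (hfix : ∀ (w : InVert F (Fin n → F)) (i : Fin n),
      w.1 = Submodule.span F {Pi.single i (1 : F)} → (σ w).1 = w.1)
    (w : InVert F (Fin n → F)) (a b : Fin n → F) (ha : a ≠ 0)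
    (hwa : w.1 = Submodule.span F {a}) (hwb : (σ w).1 = Submodule.span F {b}) :
    ∀ k : Fin n, b k = 0 ↔ a k = 0 :=
  inclGraph_aut_support_preserving_general F n hn σ hfix w a b hwa hwb
end

section
/- Let F_q be a finite field and let V be an n-dimensional vector space over F_q with n ≥ 3. If σ is a graph automorphism of In(V) that fixes every 1-dimensional subspace of V, then σ fixes every vertex of In(V), i.e., σ is the identity map on the vertex set. -/
section InclGraph

variable {F V : Type*} [Field F] [AddCommGroup V] [Module F V]

theorem Submodule.span_singleton_lt_of_mem {W : Submodule F V} (hW : Module.finrank F W ≠ 1)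
    {x : V} (hx : x ≠ 0) (hxW : x ∈ W) : F ∙ x < W :=
  lt_of_le_of_ne ((Submodule.span_singleton_le_iff_mem x W).2 hxW) fun heq =>
    hW (heq ▸ finrank_span_singleton hx)

def InVert.lineOfMem (w : InVert F V) {x : V} (hx : x ≠ 0) (hxw : x ∈ w.1) : InVert F V :=
  ⟨F ∙ x, mt Submodule.span_singleton_eq_bot.1 hx, fun htop =>
    w.2.2 (top_unique (htop.symm.trans_le ((Submodule.span_singleton_le_iff_mem x w.1).2 hxw)))⟩

theorem inclGraph_adj_iff_lt_of_isAtom {L w : InVert F V} (hL : IsAtom L.1) :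
    (inclGraph F V).Adj L w ↔ L.1 < w.1 :=
  or_iff_left fun hwL => w.2.1 (hL.lt_iff.1 hwL)

theorem InVert.le_apply_of_fixes_lines (σ : inclGraph F V ≃g inclGraph F V)
    (h : ∀ w : InVert F V, Module.finrank F w.1 = 1 → σ w = w)
    {w : InVert F V} (hw : Module.finrank F w.1 ≠ 1) : w.1 ≤ (σ w).1 := by
  intro x hxw
  by_cases hx : x = 0
  · exact hx ▸ (σ w).1.zero_mem
  set L := w.lineOfMem hx hxw
  have hL : IsAtom L.1 := nonzero_span_atom x hx
  have hLw : (inclGraph F V).Adj L w :=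
    (inclGraph_adj_iff_lt_of_isAtom hL).2 (Submodule.span_singleton_lt_of_mem hw hx hxw)
  have hLσw : (inclGraph F V).Adj L (σ w) := by
    simpa only [h L (finrank_span_singleton hx)] using σ.map_adj_iff.2 hLw
  exact ((inclGraph_adj_iff_lt_of_isAtom hL).1 hLσw).le (Submodule.mem_span_singleton_self x)

end InclGraph

theorem inclGraph_aut_fixing_lines_is_id_general
    (F V : Type*) [Field F] [AddCommGroup V] [Module F V]
    (σ : inclGraph F V ≃g inclGraph F V)
    (h : ∀ w : InVert F V, Module.finrank F w.1 = 1 → σ w = w) :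
    ∀ w : InVert F V, σ w = w := by
  intro w
  by_cases hw : Module.finrank F w.1 = 1
  · exact h w hw
  by_cases hσw : Module.finrank F (σ w).1 = 1
  · exact σ.injective (h (σ w) hσw)
  have h_symm : ∀ v : InVert F V, Module.finrank F v.1 = 1 → σ.symm v = v :=
    fun v hv => σ.symm_apply_eq.2 (h v hv).symm
  have hσw_le : (σ w).1 ≤ (σ.symm (σ w)).1 := InVert.le_apply_of_fixes_lines σ.symm h_symm hσw
  rw [σ.symm_apply_apply] at hσw_le
  exact Subtype.ext (le_antisymm hσw_le (InVert.le_apply_of_fixes_lines σ h hw))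

/-- A graph automorphism of `In(V)`, `dim V ≥ 3`, fixing every 1-dimensional subspace
is the identity on the vertex set. -/
theorem inclGraph_aut_fixing_lines_is_id
    (F V : Type*) [Field F] [Fintype F] [AddCommGroup V] [Module F V] [FiniteDimensional F V]
    (hn : 3 ≤ Module.finrank F V)
    (σ : inclGraph F V ≃g inclGraph F V)
    (h : ∀ w : InVert F V, Module.finrank F w.1 = 1 → σ w = w) :
    ∀ w : InVert F V, σ w = w :=
  inclGraph_aut_fixing_lines_is_id_general F V σ h
end
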